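/- Let A and B be unital C*-algebras and T₀ : A → B a real-linear, unital, *-preserving surjection satisfying T₀(abc + cba) = T₀(a)T₀(b)T₀(c) + T₀(c)T₀(b)T₀(a) for all a, b, c ∈ A. Then T₀(i·a) = T₀(i·1_A)·T₀(a) for every a ∈ A. -/
import Mathlib


theorem stmtN
    {A B : Type*}
    [NormedRing A] [StarRing A] [CStarRing A] [NormedAlgebra ℂ A]
    [CompleteSpace A] [StarModule ℂ A]
    [NormedRing B] [StarRing B] [CStarRing B] [NormedAlgebra ℂ B]
    [CompleteSpace B] [StarModule ℂ B]
    (T₀ : A →ₗ[ℝ] B)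
    (hsurj : Function.Surjective T₀)
    (hone : T₀ 1 = 1)
    (hstar : ∀ x : A, T₀ (star x) = star (T₀ x))
    (htriple : ∀ a b c : A,
      T₀ (a * b * c + c * b * a)
        = T₀ a * T₀ b * T₀ c + T₀ c * T₀ b * T₀ a) :
    ∀ a : A, T₀ ((Complex.I : ℂ) • a) = T₀ ((Complex.I : ℂ) • (1 : A)) * T₀ a := by
  intro a
  set i1 : A := (Complex.I : ℂ) • (1 : A) with hi1
  set j : B := T₀ i1 with hj
  have half : ∀ x y : B, x + x = y + y → x = y := by
    intro x y h
    have h2 : (2 : ℝ) • x = (2 : ℝ) • y := by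
      rw [two_smul, two_smul]; exact h
    have := smul_right_injective B (two_ne_zero (α := ℝ)) h2
    exact this
  have key : ∀ x : A, i1 * x * i1 = -x := by
    intro x
    rw [hi1, smul_mul_assoc, one_mul, mul_smul_comm, mul_one, smul_smul,
      Complex.I_mul_I, neg_one_smul]
  -- j * j = -1
  have hjj : j * j = -1 := by
    have h := htriple i1 1 i1
    rw [key 1] at h
    rw [hone, mul_one] at h
    have h' : T₀ (-(1 : A)) + T₀ (-(1 : A)) = j * j + j * j := by
      rw [← h, map_add]
    rw [map_neg, hone] at h'
    exact (half _ _ h').symm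
  -- -T₀ x = j * T₀ x * j
  have hconj : ∀ x : A, -(T₀ x) = j * T₀ x * j := by
    intro x
    have h := htriple i1 x i1
    rw [key x] at h
    have h' : T₀ (-x) + T₀ (-x) = j * T₀ x * j + j * T₀ x * j := by
      rw [← h, map_add]
    rw [map_neg] at h'
    exact half _ _ h'
  -- commutation
  have hcomm : ∀ x : A, j * T₀ x = T₀ x * j := by
    intro x
    have h := hconj x
    have := congrArg (fun z => j * z) h
    simp only [← mul_assoc] at this
    rw [hjj] at this
    simpa [mul_assoc, neg_mul] using this
  -- main identity
  have h := htriple i1 1 a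
  have harg : i1 * 1 * a + a * 1 * i1 = (Complex.I : ℂ) • a + (Complex.I : ℂ) • a := by
    rw [hi1, mul_one, mul_one, smul_mul_assoc, one_mul, mul_smul_comm, mul_one]
  rw [harg, hone, mul_one, mul_one, map_add] at h
  have h' : T₀ ((Complex.I : ℂ) • a) + T₀ ((Complex.I : ℂ) • a)
      = j * T₀ a + j * T₀ a := by
    rw [h, hcomm a]
  exact half _ _ h'
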